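/- Assume p satisfies 1 < p⁻ ≤ p⁺ < ∞ and the Ambrosetti–Rabinowitz condition holds for f with exponent θ > p⁺: 0 < θF(t) ≤ tf(t) for |t| > R₀. If {u_n} ⊂ E satisfies I(u_n) ≤ M and I'(u_n) → 0, where I(u) = ∫_Ω P(|Δu|) dx − ∫_Ω F(u) dx, then ∫_Ω P(|Δu_n|) dx is bounded; in particular {u_n} is bounded in E. -/

import Mathlib

/-!
Subtract the tested derivative `I'(uₙ)uₙ` from `θ I(uₙ)`. The Ambrosetti–Rabinowitz condition
bounds `θ F(t) - f(t) t` above by a constant `C`, and `P(t) ≤ t p(t) ≤ p⁺ P(t)`, so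
`(θ - p⁺) ∫ P(|Δuₙ|) ≤ θ M + C |Ω| + εₙ ‖Δuₙ‖_P`. Convexity of `P` gives
`‖v‖_P ≤ max 1 (∫ P(|v|))`, so once `εₙ` is small the modular `∫ P(|Δuₙ|)` is bounded by a constant;
the finitely many earlier terms do not matter.
-/

open Set MeasureTheory Filter

/-- The Laplacian of a real-valued function on `ℝⁿ`. -/
noncomputable def lap {n : ℕ} (u : (Fin n → ℝ) → ℝ) (x : Fin n → ℝ) : ℝ :=
  ∑ i, fderiv ℝ (fun y => fderiv ℝ u y (Pi.single i 1)) x (Pi.single i 1)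

/-- The Luxemburg norm of `u` on `Ω` with respect to the N-function `P`. -/
noncomputable def luxemburgNorm {N : ℕ} (P : ℝ → ℝ) (Ω : Set (Fin N → ℝ))
    (u : (Fin N → ℝ) → ℝ) : ℝ :=
  sInf {k : ℝ | 0 < k ∧ ∫ x in Ω, P (|u x| / k) ≤ 1}

section MonotonePrimitive
variable {q : ℝ → ℝ}

theorem Monotone.intervalIntegral_div_le (hq : Monotone q) {t k : ℝ} (ht : 0 ≤ t) (hk : 1 ≤ k) :
    ∫ s in (0:ℝ)..t / k, q s ≤ (∫ s in (0:ℝ)..t, q s) / k := by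
  have hk0 : 0 < k := zero_lt_one.trans_le hk
  have hqk : ∫ s in (0:ℝ)..t / k, q s ≤ ∫ s in (0:ℝ)..t / k, q (k * s) :=
    intervalIntegral.integral_mono_on (by positivity) hq.intervalIntegrable
      (hq.comp (monotone_mul_left_of_nonneg hk0.le)).intervalIntegrable
      fun s hs => hq (le_mul_of_one_le_left hs.1 hk)
  rw [le_div_iff₀ hk0, mul_comm]
  calc k * ∫ s in (0:ℝ)..t / k, q s ≤ k * ∫ s in (0:ℝ)..t / k, q (k * s) :=
        mul_le_mul_of_nonneg_left hqk hk0.le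
    _ = ∫ s in (0:ℝ)..t, q s := by
        rw [← smul_eq_mul, intervalIntegral.smul_integral_comp_mul_left, mul_zero,
          mul_div_cancel₀ _ hk0.ne']

theorem Monotone.strictMonoOn_intervalIntegral (hq : Monotone q) (hpos : ∀ t > 0, 0 < q t) :
    StrictMonoOn (fun t => ∫ s in (0:ℝ)..t, q s) (Ici 0) := by
  intro s hs t _ hst
  have h := intervalIntegral.integral_interval_sub_left (μ := volume) (a := 0) (b := t) (c := s)
    hq.intervalIntegrable hq.intervalIntegrable
  have := intervalIntegral.intervalIntegral_pos_of_pos_on hq.intervalIntegrable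
    (fun x hx => hpos x (lt_of_le_of_lt hs hx.1)) hst
  dsimp only
  linarith

end MonotonePrimitive

theorem aemeasurable_of_strictMonoOn_comp {α : Type*} [MeasurableSpace α] {μ : Measure α}
    {Φ : ℝ → ℝ} {g : α → ℝ} (hΦ : StrictMonoOn Φ (Ici 0)) (hg : ∀ x, 0 ≤ g x)
    (h : AEMeasurable (fun x => Φ (g x)) μ) : AEMeasurable g μ := by
  refine NullMeasurable.aemeasurable (measurable_of_Iio (δ := NullMeasurableSpace α μ) (f := g)
    fun a => show NullMeasurableSet (g ⁻¹' Iio a) μ from ?_)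
  rcases le_or_gt a 0 with ha | ha
  · convert nullMeasurableSet_empty (μ := μ)
    exact eq_empty_of_forall_notMem fun x hx => (hg x).not_gt (lt_of_lt_of_le hx ha)
  · have : g ⁻¹' Iio a = (fun x => Φ (g x)) ⁻¹' Iio (Φ a) := by
      ext x; exact (hΦ.lt_iff_lt (hg x) ha.le).symm
    rw [this]; exact h.nullMeasurable measurableSet_Iio

theorem Continuous.bddAbove_range_of_nonpos_of_lt_abs {g : ℝ → ℝ} {R : ℝ} (hg : Continuous g)
    (hR : ∀ t, R < |t| → g t ≤ 0) : BddAbove (range g) := by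
  obtain ⟨C, hC⟩ := (isCompact_Icc (a := -R) (b := R)).bddAbove_image hg.continuousOn
  refine ⟨max C 0, forall_mem_range.2 fun t => ?_⟩
  rcases le_or_gt |t| R with h | h
  · exact le_max_of_le_left (hC ⟨t, abs_le.1 h, rfl⟩)
  · exact le_max_of_le_right (hR t h)

structure IsNFunction (p P : ℝ → ℝ) : Prop where
  eq_integral : ∀ t, P t = ∫ s in (0:ℝ)..t, p s
  density_pos : ∀ t > 0, 0 < p t
  density_strictMonoOn : StrictMonoOn p (Ioi 0)

namespace IsNFunction
variable {p P : ℝ → ℝ} (hP : IsNFunction p P)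
include hP

/-- `p` is unconstrained on `(-∞, 0]`; cutting it off there gives a monotone density with the
same primitive on `[0, ∞)`. -/
theorem monotone_indicator : Monotone ((Ioi (0:ℝ)).indicator p) := by
  intro s t hst
  by_cases hs : 0 < s
  · rw [indicator_of_mem (mem_Ioi.2 hs), indicator_of_mem (mem_Ioi.2 (hs.trans_le hst))]
    exact hP.density_strictMonoOn.monotoneOn hs (hs.trans_le hst) hst
  · rw [indicator_of_notMem (mt mem_Ioi.1 hs)]
    exact indicator_nonneg (fun x hx => (hP.density_pos x hx).le) t

theorem eq_integral_indicator {t : ℝ} (ht : 0 ≤ t) :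
    P t = ∫ s in (0:ℝ)..t, (Ioi 0).indicator p s := by
  rw [hP.eq_integral]
  refine intervalIntegral.integral_congr_ae (Eventually.of_forall fun s hs => ?_)
  rw [uIoc_of_le ht] at hs
  exact (indicator_of_mem hs.1 p).symm

theorem map_zero : P 0 = 0 := by
  rw [hP.eq_integral, intervalIntegral.integral_same]

theorem div_le {t k : ℝ} (ht : 0 ≤ t) (hk : 1 ≤ k) : P (t / k) ≤ P t / k := by
  rw [hP.eq_integral_indicator ht, hP.eq_integral_indicator (div_nonneg ht (by linarith))]
  exact hP.monotone_indicator.intervalIntegral_div_le ht hk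

theorem strictMonoOn : StrictMonoOn P (Ici 0) := by
  intro s hs t ht hst
  rw [hP.eq_integral_indicator hs, hP.eq_integral_indicator ht]
  exact hP.monotone_indicator.strictMonoOn_intervalIntegral
    (fun x hx => by rw [indicator_of_mem (mem_Ioi.2 hx)]; exact hP.density_pos x hx) hs ht hst

theorem pos {t : ℝ} (ht : 0 < t) : 0 < P t := by
  simpa [hP.map_zero] using hP.strictMonoOn self_mem_Ici ht.le ht

theorem le_density_mul {t : ℝ} (ht : 0 ≤ t) : P t ≤ p t * t := by
  rcases ht.eq_or_lt with rfl | ht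
  · simp [hP.map_zero]
  rw [hP.eq_integral_indicator ht.le, ← indicator_of_mem (show t ∈ Ioi 0 from ht) p]
  simpa [mul_comm] using intervalIntegral.integral_mono_on ht.le
    hP.monotone_indicator.intervalIntegrable (intervalIntegrable_const (μ := volume))
    fun s hs => hP.monotone_indicator hs.2

theorem density_mul_le {pplus t : ℝ} (hhigh : ∀ t > 0, t * p t / P t ≤ pplus) (ht : 0 ≤ t) :
    p t * t ≤ pplus * P t := by
  rcases ht.eq_or_lt with rfl | ht
  · simp [hP.map_zero]
  have := (div_le_iff₀ (hP.pos ht)).1 (hhigh t ht)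
  linarith

theorem strictMonoOn_density_mul : StrictMonoOn (fun t => p t * t) (Ici 0) := by
  intro s hs t _ hst
  rcases (mem_Ici.1 hs).eq_or_lt with rfl | hs
  · simpa using mul_pos (hP.density_pos t hst) hst
  · exact mul_lt_mul'' (hP.density_strictMonoOn hs (hs.trans hst) hst) hst
      (hP.density_pos s hs).le hs.le

theorem nonneg {t : ℝ} (ht : 0 ≤ t) : 0 ≤ P t := by
  rcases ht.eq_or_lt with rfl | ht
  · exact hP.map_zero.ge
  · exact (hP.pos ht).le

variable {α : Type*} [MeasurableSpace α] {μ : Measure α} {g : α → ℝ}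

theorem aemeasurable_comp (hg : AEMeasurable g μ) (hg0 : ∀ x, 0 ≤ g x) :
    AEMeasurable (fun x => P (g x)) μ := by
  have hcont : Continuous fun t => ∫ s in (0:ℝ)..t, (Ioi 0).indicator p s :=
    intervalIntegral.continuous_primitive (fun _ _ => hP.monotone_indicator.intervalIntegrable) 0
  exact (hcont.measurable.comp_aemeasurable hg).congr
    (Eventually.of_forall fun x => (hP.eq_integral_indicator (hg0 x)).symm)

theorem aemeasurable_density_mul_comp (hg : AEMeasurable g μ) (hg0 : ∀ x, 0 ≤ g x) :
    AEMeasurable (fun x => p (g x) * g x) μ := by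
  refine ((hP.monotone_indicator.measurable.comp_aemeasurable hg).mul hg).congr
    (Eventually.of_forall fun x => ?_)
  rcases (hg0 x).eq_or_lt with h | h
  · simp [← h]
  · simp [indicator_of_mem (mem_Ioi.2 h)]

variable {pplus : ℝ} (hhigh : ∀ t > 0, t * p t / P t ≤ pplus)
include hhigh

/-- No measurability of `g` is assumed: it is recovered from either integrable composite. -/
theorem integrable_comp_iff (hg0 : ∀ x, 0 ≤ g x) :
    Integrable (fun x => P (g x)) μ ↔ Integrable (fun x => p (g x) * g x) μ := by
  constructor
  · intro h
    have hg := aemeasurable_of_strictMonoOn_comp hP.strictMonoOn hg0 h.aemeasurable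
    refine (h.const_mul pplus).mono' (hP.aemeasurable_density_mul_comp hg hg0).aestronglyMeasurable
      (Eventually.of_forall fun x => ?_)
    rw [Real.norm_of_nonneg ((hP.nonneg (hg0 x)).trans (hP.le_density_mul (hg0 x)))]
    exact hP.density_mul_le hhigh (hg0 x)
  · intro h
    have hg := aemeasurable_of_strictMonoOn_comp hP.strictMonoOn_density_mul hg0 h.aemeasurable
    refine h.mono' (hP.aemeasurable_comp hg hg0).aestronglyMeasurable
      (Eventually.of_forall fun x => ?_)
    rw [Real.norm_of_nonneg (hP.nonneg (hg0 x))]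
    exact hP.le_density_mul (hg0 x)

theorem integral_le_integral_density_mul (hg0 : ∀ x, 0 ≤ g x) :
    ∫ x, P (g x) ∂μ ≤ ∫ x, p (g x) * g x ∂μ := by
  by_cases h : Integrable (fun x => P (g x)) μ
  · exact integral_mono h ((hP.integrable_comp_iff hhigh hg0).1 h)
      fun x => hP.le_density_mul (hg0 x)
  · rw [integral_undef h, integral_undef (mt (hP.integrable_comp_iff hhigh hg0).2 h)]

theorem integral_density_mul_le (hg0 : ∀ x, 0 ≤ g x) :
    ∫ x, p (g x) * g x ∂μ ≤ pplus * ∫ x, P (g x) ∂μ := by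
  by_cases h : Integrable (fun x => P (g x)) μ
  · rw [← integral_const_mul]
    exact integral_mono ((hP.integrable_comp_iff hhigh hg0).1 h) (h.const_mul pplus)
      fun x => hP.density_mul_le hhigh (hg0 x)
  · rw [integral_undef h, integral_undef (mt (hP.integrable_comp_iff hhigh hg0).2 h), mul_zero]

end IsNFunction

theorem luxemburgNorm_nonneg {N : ℕ} (P : ℝ → ℝ) (Ω : Set (Fin N → ℝ)) (v : (Fin N → ℝ) → ℝ) :
    0 ≤ luxemburgNorm P Ω v :=
  Real.sInf_nonneg fun _ hk => hk.1.le

theorem luxemburgNorm_le_max_one_integral {N : ℕ} {P : ℝ → ℝ} (Ω : Set (Fin N → ℝ))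
    (v : (Fin N → ℝ) → ℝ) (hP : ∀ t k, 0 ≤ t → 1 ≤ k → P (t / k) ≤ P t / k) :
    luxemburgNorm P Ω v ≤ max 1 (∫ x in Ω, P |v x|) := by
  set k := max 1 (∫ x in Ω, P |v x|)
  have hk : 1 ≤ k := le_max_left _ _
  refine csInf_le ⟨0, fun _ hk => hk.1.le⟩ ⟨by linarith, ?_⟩
  by_cases hk_int : Integrable (fun x => P (|v x| / k)) (volume.restrict Ω)
  swap
  · rw [integral_undef hk_int]; exact zero_le_one
  by_cases h_int : Integrable (fun x => P |v x|) (volume.restrict Ω)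
  swap
  · simp [k, integral_undef h_int]
  calc ∫ x in Ω, P (|v x| / k) ≤ ∫ x in Ω, P |v x| / k :=
        integral_mono hk_int (h_int.div_const k) fun x => hP _ _ (abs_nonneg _) hk
    _ = (∫ x in Ω, P |v x|) / k := integral_div _ _
    _ ≤ 1 := div_le_one_of_le₀ (le_max_right _ _) (by linarith)

theorem le_of_ambrosettiRabinowitz {α : Type*} [MeasurableSpace α] {μ : Measure α}
    [IsFiniteMeasure μ] {f F : ℝ → ℝ} {w : α → ℝ} {A K M C θ pplus δ : ℝ}
    (hC : ∀ t, θ * F t - f t * t ≤ C) (hθ : pplus < θ)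
    (hAK : A ≤ K) (hK : K ≤ pplus * A) (hM : A - ∫ x, F (w x) ∂μ ≤ M)
    (hH : |K - ∫ x, f (w x) * w x ∂μ| ≤ δ * max 1 A) (hδ : δ ≤ (θ - pplus) / 2) (hδ1 : δ < 1) :
    A ≤ max (max M 1) (2 * (θ * M + μ.real univ * C) / (θ - pplus)) := by
  rcases le_or_gt A 1 with hA1 | hA1
  · exact le_max_of_le_left (le_max_of_le_right hA1)
  rw [max_eq_right hA1.le] at hH
  -- A non-integrable integrand has integral `0`, and then `hM` resp. `hH` alone bounds `A`.
  by_cases hFw : Integrable (fun x => F (w x)) μ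
  swap
  · rw [integral_undef hFw, sub_zero] at hM
    exact le_max_of_le_left (le_max_of_le_left hM)
  by_cases hfw : Integrable (fun x => f (w x) * w x) μ
  swap
  · rw [integral_undef hfw, sub_zero] at hH
    nlinarith [le_abs_self K]
  have hAR : θ * ∫ x, F (w x) ∂μ - ∫ x, f (w x) * w x ∂μ ≤ μ.real univ * C := by
    rw [← integral_const_mul, ← integral_sub (hFw.const_mul θ) hfw, ← smul_eq_mul,
      ← integral_const]
    exact integral_mono ((hFw.const_mul θ).sub hfw) (integrable_const C) fun x => hC (w x)
  have hθ0 : 0 ≤ θ := by nlinarith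
  have := mul_le_mul_of_nonneg_left hM hθ0
  have := mul_le_mul_of_nonneg_right hδ (zero_le_one.trans hA1.le)
  apply le_max_of_le_right
  rw [le_div_iff₀ (by linarith)]
  linarith [abs_le.1 hH]

theorem PS_sequence_bounded_general {N : ℕ}
    (Ω : Set (Fin N → ℝ)) (hΩbdd : Bornology.IsBounded Ω)
    (p P : ℝ → ℝ)
    (hP : ∀ t, P t = ∫ s in (0:ℝ)..t, p s)
    (hp_pos : ∀ t > 0, 0 < p t) (hp_mono : StrictMonoOn p (Ioi 0))
    (pplus : ℝ)
    (hhigh : ∀ t > 0, t * p t / P t ≤ pplus)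
    (f F : ℝ → ℝ) (hf : Continuous f) (hF : ∀ t, F t = ∫ s in (0:ℝ)..t, f s)
    (θ R₀ : ℝ) (hθ : pplus < θ)
    (hAR : ∀ t : ℝ, R₀ < |t| → 0 < θ * F t ∧ θ * F t ≤ t * f t)
    (u : ℕ → (Fin N → ℝ) → ℝ)
    (M : ℝ)
    (hbound : ∀ n, (∫ x in Ω, P (|lap (u n) x|)) - (∫ x in Ω, F (u n x)) ≤ M)
    (ε : ℕ → ℝ) (hε : Tendsto ε atTop (nhds 0))
    (hderiv : ∀ n,
      |(∫ x in Ω, p (|lap (u n) x|) * |lap (u n) x|) - (∫ x in Ω, f (u n x) * u n x)|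
        ≤ ε n * luxemburgNorm P Ω (lap (u n))) :
    (∃ B : ℝ, ∀ n, ∫ x in Ω, P (|lap (u n) x|) ≤ B) ∧
      (∃ B' : ℝ, ∀ n, luxemburgNorm P Ω (lap (u n)) ≤ B') := by
  have hNP : IsNFunction p P := ⟨hP, hp_pos, hp_mono⟩
  have hFc : Continuous F := (intervalIntegral.continuous_primitive
    (fun a b => hf.intervalIntegrable a b) 0).congr fun t => (hF t).symm
  have hARc : Continuous fun t => θ * F t - f t * t := by fun_prop
  obtain ⟨C, hC⟩ := hARc.bddAbove_range_of_nonpos_of_lt_abs fun t ht =>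
    sub_nonpos.2 ((mul_comm (f t) t).symm ▸ (hAR t ht).2)
  have : IsFiniteMeasure (volume.restrict Ω) := isFiniteMeasure_restrict.2 hΩbdd.measure_lt_top.ne
  set A := fun n => ∫ x in Ω, P |lap (u n) x|
  have hlux : ∀ n, luxemburgNorm P Ω (lap (u n)) ≤ max 1 (A n) := fun n =>
    luxemburgNorm_le_max_one_integral Ω _ fun _ _ ht hk => hNP.div_le ht hk
  set δ := min ((θ - pplus) / 2) (1 / 2)
  have hδ : 0 < δ := lt_min (by linarith) one_half_pos
  have hsmall : ∀ᶠ n in atTop, ε n < δ := hε.eventually (gt_mem_nhds hδ)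
  obtain ⟨B, hB⟩ : BddAbove (range A) := IsBoundedUnder.bddAbove_range <|
    isBoundedUnder_of_eventually_le <| hsmall.mono fun n hn => by
      refine le_of_ambrosettiRabinowitz (w := u n) (fun t => hC ⟨t, rfl⟩) hθ
        (hNP.integral_le_integral_density_mul hhigh fun _ => abs_nonneg _)
        (hNP.integral_density_mul_le hhigh fun _ => abs_nonneg _) (hbound n)
        ((hderiv n).trans ?_) (min_le_left _ _) ((min_le_right _ _).trans_lt one_half_lt_one)
      have hL := luxemburgNorm_nonneg P Ω (lap (u n))
      nlinarith [hlux n, mul_le_mul_of_nonneg_left (hlux n) hδ.le]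
  exact ⟨⟨B, fun n => hB ⟨n, rfl⟩⟩,
    ⟨max 1 B, fun n => (hlux n).trans (max_le_max le_rfl (hB ⟨n, rfl⟩))⟩⟩

/-- a Palais–Smale sequence for `I(u) = ∫_Ω P(|Δu|) − ∫_Ω F(u)` is bounded,
under the Ambrosetti–Rabinowitz condition with `θ > p⁺`. -/
theorem PS_sequence_bounded {N : ℕ}
    (Ω : Set (Fin N → ℝ)) (hΩmeas : MeasurableSet Ω) (hΩbdd : Bornology.IsBounded Ω)
    (p P : ℝ → ℝ)
    (hP : ∀ t, P t = ∫ s in (0:ℝ)..t, p s)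
    (hp_pos : ∀ t > 0, 0 < p t) (hp_mono : StrictMonoOn p (Ioi 0))
    (pminus pplus : ℝ) (h1 : 1 < pminus) (h2 : pminus ≤ pplus)
    (hlow : ∀ t > 0, pminus ≤ t * p t / P t)
    (hhigh : ∀ t > 0, t * p t / P t ≤ pplus)
    (f F : ℝ → ℝ) (hf : Continuous f) (hF : ∀ t, F t = ∫ s in (0:ℝ)..t, f s)
    (θ R₀ : ℝ) (hθ : pplus < θ) (hR₀ : 0 < R₀)
    (hAR : ∀ t : ℝ, R₀ < |t| → 0 < θ * F t ∧ θ * F t ≤ t * f t)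
    (u : ℕ → (Fin N → ℝ) → ℝ)
    (M : ℝ)
    (hbound : ∀ n, (∫ x in Ω, P (|lap (u n) x|)) - (∫ x in Ω, F (u n x)) ≤ M)
    (ε : ℕ → ℝ) (hε_pos : ∀ n, 0 ≤ ε n) (hε : Tendsto ε atTop (nhds 0))
    (hderiv : ∀ n,
      |(∫ x in Ω, p (|lap (u n) x|) * |lap (u n) x|) - (∫ x in Ω, f (u n x) * u n x)|
        ≤ ε n * luxemburgNorm P Ω (lap (u n))) :
    (∃ B : ℝ, ∀ n, ∫ x in Ω, P (|lap (u n) x|) ≤ B) ∧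
      (∃ B' : ℝ, ∀ n, luxemburgNorm P Ω (lap (u n)) ≤ B') :=
  PS_sequence_bounded_general Ω hΩbdd p P hP hp_pos hp_mono pplus hhigh f F hf hF θ R₀ hθ hAR u M
    hbound ε hε hderiv
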